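/- For all n > 24, if 0 < ε < 1/3, δ > 0, and m = ε^{-2} n^{1+δ}, then P(A) ≥ 9/10, where A = { y ∈ U^m : |∑_{i=1}^n k_i(y)(k_i(y)−1)/(m(m−1)) · 1/‖p‖² − 1| ≤ 3ε } and U^m carries the product measure. -/

import Mathlib

/-!
Let `Y` be the number of ordered pairs `j ≠ j'` of positions whose keys hash to the same slot,
so that the estimator is `Y / (m(m-1))`. Each pair collides with probability `‖p‖²`, so
`E Y = m(m-1)‖p‖²`. Collisions of disjoint pairs are independent, and two pairs sharing one
position collide together with probability `∑ p_i³ ≤ ‖p‖³`; hence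
`Var Y ≤ m(m-1)(4‖p‖² + 4m ∑ p_i³)`. Chebyshev's inequality at deviation `3ε m(m-1)‖p‖²`,
with `‖p‖² ≥ 1/n` (Cauchy–Schwarz) and `m ≥ ε⁻² n`, bounds the failure probability by `1/10`.
-/

/-- Number of keys of the sequence `x` (counted with multiplicity) hashed into slot `i`. -/
def kcount {U : Type*} [Fintype U] {n m : ℕ} (h : U → Fin n) (x : Fin m → U) (i : Fin n) : ℕ :=
  (Finset.univ.filter (fun j => h (x j) = i)).card

/-- Probability of a set `S` of key sequences, under the product measure induced by
the probability mass function `q` on the key space `U`. -/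
noncomputable def Pr {U : Type*} [Fintype U] {m : ℕ} (q : U → ℝ) (S : Set (Fin m → U)) : ℝ :=
  ∑ x : Fin m → U, S.indicator (fun y => ∏ j, q (y j)) x

/-- The empirical collision probability `∑ i, k_i(x)(k_i(x) − 1) / (m(m−1))`
of a sequence `x` of `m` keys. -/
noncomputable def collEst {U : Type*} [Fintype U] {n m : ℕ} (h : U → Fin n)
    (x : Fin m → U) : ℝ :=
  ∑ i : Fin n, (kcount h x i : ℝ) * ((kcount h x i : ℝ) - 1) / ((m : ℝ) * ((m : ℝ) - 1))


open Finset

section ProductExpectation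

variable {U ι : Type*} [Fintype U] [Fintype ι] [DecidableEq ι] (q : U → ℝ)

noncomputable def piExpect (f : (ι → U) → ℝ) : ℝ :=
  ∑ x, (∏ j, q (x j)) * f x

lemma piExpect_add (f g : (ι → U) → ℝ) :
    piExpect q (fun x => f x + g x) = piExpect q f + piExpect q g := by
  simp only [piExpect, mul_add, sum_add_distrib]

lemma piExpect_const_mul (c : ℝ) (f : (ι → U) → ℝ) :
    piExpect q (fun x => c * f x) = c * piExpect q f := by
  simp only [piExpect, mul_sum, mul_left_comm]

lemma piExpect_sum {κ : Type*} (S : Finset κ) (f : κ → (ι → U) → ℝ) :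
    piExpect q (fun x => ∑ k ∈ S, f k x) = ∑ k ∈ S, piExpect q (f k) := by
  simp only [piExpect, mul_sum]
  exact sum_comm

variable {q} (hq1 : ∑ u, q u = 1)
include hq1

lemma sum_prod_eq_one : ∑ x : ι → U, ∏ j, q (x j) = 1 := by
  simp [← Fintype.prod_sum, hq1]

lemma piExpect_const (c : ℝ) : piExpect q (fun (_ : ι → U) => c) = c := by
  simp [piExpect, ← sum_mul, sum_prod_eq_one hq1]

lemma piExpect_prod (T : Finset ι) (g : ι → U → ℝ) :
    piExpect q (fun x => ∏ t ∈ T, g t (x t)) = ∏ t ∈ T, ∑ u, q u * g t u := by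
  calc piExpect q (fun x => ∏ t ∈ T, g t (x t))
      = ∑ x : ι → U, ∏ j, q (x j) * (if j ∈ T then g j (x j) else 1) := by
        simp only [piExpect, prod_mul_distrib, Fintype.prod_ite_mem]
    _ = ∏ j, (if j ∈ T then ∑ u, q u * g j u else 1) := by
        rw [← Fintype.prod_sum (fun j u => q u * if j ∈ T then g j u else 1)]
        refine Fintype.prod_congr _ _ fun j => ?_
        split_ifs <;> simp [hq1]
    _ = ∏ t ∈ T, ∑ u, q u * g t u := Fintype.prod_ite_mem T _

lemma piExpect_sum_sub_sq {κ : Type*} (S : Finset κ) (Z : κ → (ι → U) → ℝ) {s : ℝ}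
    (hZ : ∀ k ∈ S, piExpect q (Z k) = s) :
    piExpect q (fun x => (∑ k ∈ S, Z k x - #S * s) ^ 2) =
      ∑ k ∈ S, ∑ l ∈ S, (piExpect q (fun x => Z k x * Z l x) - s ^ 2) := by
  have expand : ∀ x, (∑ k ∈ S, Z k x - #S * s) ^ 2 =
      ∑ k ∈ S, ∑ l ∈ S, (Z k x * Z l x + (-s) * Z k x + (-s) * Z l x + s ^ 2) := by
    intro x
    rw [show ∑ k ∈ S, Z k x - #S * s = ∑ k ∈ S, (Z k x - s) by simp [sum_sub_distrib], sq,
      sum_mul_sum]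
    exact sum_congr rfl fun k _ => sum_congr rfl fun l _ => by ring
  simp only [expand, piExpect_sum, piExpect_add, piExpect_const_mul, piExpect_const hq1]
  refine sum_congr rfl fun k hk => sum_congr rfl fun l hl => ?_
  rw [hZ k hk, hZ l hl]
  ring

end ProductExpectation

lemma one_sub_piExpect_sq_div_le_Pr {U : Type*} [Fintype U] {q : U → ℝ} (hq0 : ∀ u, 0 ≤ q u)
    (hq1 : ∑ u, q u = 1) {m : ℕ} (f : (Fin m → U) → ℝ) (μ : ℝ) {c : ℝ} (hc : 0 < c) :
    1 - piExpect q (fun x => (f x - μ) ^ 2) / c ^ 2 ≤ Pr q {x | |f x - μ| ≤ c} := by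
  calc 1 - piExpect q (fun x => (f x - μ) ^ 2) / c ^ 2
      = ∑ x, (∏ j, q (x j)) * (1 - (f x - μ) ^ 2 / c ^ 2) := by
        simp only [piExpect, mul_sub, mul_one, sum_sub_distrib, sum_prod_eq_one hq1, sum_div,
          mul_div_assoc]
    _ ≤ Pr q {x | |f x - μ| ≤ c} := by
        refine sum_le_sum fun x _ => ?_
        have hw : 0 ≤ ∏ j, q (x j) := prod_nonneg fun j _ => hq0 _
        rw [Set.indicator_apply]
        split_ifs with hx <;> simp only [Set.mem_ofPred_eq] at hx
        · have : 0 ≤ (f x - μ) ^ 2 / c ^ 2 := by positivity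
          nlinarith
        · have : c ^ 2 ≤ (f x - μ) ^ 2 := by
            rw [← sq_abs (f x - μ)]; exact pow_le_pow_left₀ hc.le (not_le.1 hx).le 2
          have : 1 ≤ (f x - μ) ^ 2 / c ^ 2 := by rwa [le_div_iff₀ (by positivity), one_mul]
          nlinarith

lemma sum_prod_ite_eq_of_mem {ι κ : Type*} [Fintype κ] [DecidableEq κ] (f : ι → κ)
    {T : Finset ι} {a : ι} (ha : a ∈ T) :
    ∑ i, ∏ t ∈ T, (if f t = i then (1 : ℝ) else 0) =
      ∏ t ∈ T, if f t = f a then 1 else 0 :=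
  sum_eq_single (f a) (fun _ _ hi => prod_eq_zero ha (if_neg fun e => hi e.symm)) (by simp)

lemma card_offDiag_univ {ι : Type*} [Fintype ι] [DecidableEq ι] :
    (#(univ : Finset ι).offDiag : ℝ) = Fintype.card ι * (Fintype.card ι - 1) := by
  rw [offDiag_card, card_univ, Nat.cast_sub (Nat.le_mul_self _)]
  push_cast
  ring

section Collisions

variable {U ι : Type*} {n : ℕ} (h : U → Fin n)

def collision (a b : ι) (x : ι → U) : ℝ :=
  if h (x a) = h (x b) then 1 else 0

lemma collision_comm (a b : ι) : collision h a b = collision h b a := by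
  funext x
  simp only [collision, eq_comm]

lemma collision_mul_self (a b : ι) (x : ι → U) :
    collision h a b x * collision h a b x = collision h a b x := by
  unfold collision
  split_ifs <;> norm_num

variable [DecidableEq ι]

lemma collision_eq_sum {a b : ι} (hab : a ≠ b) (x : ι → U) :
    collision h a b x = ∑ i, ∏ t ∈ {a, b}, if h (x t) = i then 1 else 0 := by
  rw [sum_prod_ite_eq_of_mem _ (mem_insert_self a {b})]
  simp [prod_pair hab, collision, eq_comm]

lemma collision_mul_collision_eq_sum {a b c : ι} (hab : a ≠ b) (hac : a ≠ c) (hbc : b ≠ c)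
    (x : ι → U) :
    collision h a b x * collision h a c x =
      ∑ i, ∏ t ∈ {a, b, c}, if h (x t) = i then 1 else 0 := by
  rw [sum_prod_ite_eq_of_mem _ (mem_insert_self a {b, c})]
  simp [prod_insert, hab, hac, hbc, collision, eq_comm]

variable [Fintype ι]

noncomputable def numCollisions (x : ι → U) : ℝ :=
  ∑ pr ∈ (univ : Finset ι).offDiag, collision h pr.1 pr.2 x

lemma sum_kcount_mul_kcount_sub_one [Fintype U] {m : ℕ} (x : Fin m → U) :
    ∑ i, (kcount h x i : ℝ) * (kcount h x i - 1) = numCollisions h x := by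
  have hfiber : ∀ i,
      univ.offDiag.filter (fun pr : Fin m × Fin m => h (x pr.1) = i ∧ h (x pr.2) = i) =
        (univ.filter fun j => h (x j) = i).offDiag := by
    intro i; ext pr; simp only [mem_filter, mem_offDiag, mem_univ, true_and]; tauto
  calc ∑ i, (kcount h x i : ℝ) * (kcount h x i - 1)
      = ∑ i, ∑ pr ∈ (univ : Finset (Fin m)).offDiag,
          if h (x pr.1) = i ∧ h (x pr.2) = i then 1 else 0 := by
        refine sum_congr rfl fun i _ => ?_
        rw [sum_boole, hfiber, offDiag_card, kcount, Nat.cast_sub (Nat.le_mul_self _)]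
        push_cast
        ring
    _ = numCollisions h x := by
        rw [sum_comm]
        refine sum_congr rfl fun pr _ => ?_
        simp only [ite_and, sum_ite_eq, mem_univ, if_true, collision]
        exact if_congr eq_comm rfl rfl

lemma collEst_eq_numCollisions_div [Fintype U] {m : ℕ} (x : Fin m → U) :
    collEst h x = numCollisions h x / (m * (m - 1)) := by
  rw [collEst, ← sum_div, sum_kcount_mul_kcount_sub_one]

lemma abs_collEst_mul_one_div_sub_one_le_iff [Fintype U] {m : ℕ} (hm : 2 ≤ m) {s : ℝ}
    (hs : 0 < s) (x : Fin m → U) (c : ℝ) :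
    |collEst h x * (1 / s) - 1| ≤ c ↔
      |numCollisions h x - m * (m - 1) * s| ≤ c * (m * (m - 1) * s) := by
  have hm1 : (1 : ℝ) < m := by exact_mod_cast hm
  have hKs : 0 < m * (m - 1) * s := by apply mul_pos <;> nlinarith
  rw [collEst_eq_numCollisions_div, ← div_le_iff₀ hKs, ← abs_of_pos hKs, ← abs_div,
    abs_of_pos hKs]
  have : (m : ℝ) - 1 ≠ 0 := by linarith
  congr! 2
  field_simp

end Collisions

section CollisionMoments

variable {U ι : Type*} [Fintype U] [Fintype ι] [DecidableEq ι] {n : ℕ} (h : U → Fin n)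
  {q : U → ℝ} (hq1 : ∑ u, q u = 1) {p : Fin n → ℝ}
  (hp : ∀ i, p i = ∑ u ∈ univ.filter (fun u => h u = i), q u)
include hp

omit [Fintype ι] [DecidableEq ι] in
lemma sum_mul_ite_eq (i : Fin n) : ∑ u, q u * (if h u = i then 1 else 0) = p i := by
  simp [hp, sum_filter]

include hq1

lemma piExpect_prod_ite_eq (T : Finset ι) (c : ι → Fin n) :
    piExpect q (fun x => ∏ t ∈ T, if h (x t) = c t then 1 else 0) = ∏ t ∈ T, p (c t) := by
  rw [piExpect_prod hq1 T fun t u => if h u = c t then 1 else 0]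
  simp only [sum_mul_ite_eq h hp]

lemma piExpect_collision {a b : ι} (hab : a ≠ b) :
    piExpect q (collision h a b) = ∑ i, p i ^ 2 := by
  rw [funext (collision_eq_sum h hab), piExpect_sum]
  refine sum_congr rfl fun i _ => ?_
  exact (piExpect_prod_ite_eq h hq1 hp _ fun _ => i).trans (by simp [prod_pair hab, sq])

lemma piExpect_collision_mul_collision_of_three {a b c : ι} (hab : a ≠ b) (hac : a ≠ c)
    (hbc : b ≠ c) :
    piExpect q (fun x => collision h a b x * collision h a c x) = ∑ i, p i ^ 3 := by
  rw [funext (collision_mul_collision_eq_sum h hab hac hbc), piExpect_sum]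
  refine sum_congr rfl fun i _ => ?_
  exact (piExpect_prod_ite_eq h hq1 hp _ fun _ => i).trans (by simp [hab, hac, hbc])

lemma piExpect_collision_mul_collision_of_four {a b c d : ι} (hab : a ≠ b) (hac : a ≠ c)
    (had : a ≠ d) (hbc : b ≠ c) (hbd : b ≠ d) (hcd : c ≠ d) :
    piExpect q (fun x => collision h a b x * collision h c d x) = (∑ i, p i ^ 2) ^ 2 := by
  simp_rw [collision_eq_sum h hab, collision_eq_sum h hcd, sum_mul_sum, piExpect_sum, sq,
    sum_mul_sum]
  refine sum_congr rfl fun i _ => sum_congr rfl fun j _ => ?_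
  have := piExpect_prod_ite_eq h hq1 hp {a, b, c, d} fun t => if t = a ∨ t = b then i else j
  simp [hab, hac, had, hbc, hbd, hcd, hac.symm, had.symm, hbc.symm, hbd.symm] at this ⊢
  rw [this]
  ring

variable (hp0 : ∀ i, 0 ≤ p i)
include hp0

/- The covariance of the collision indicators of `(a, b)` and `(c, d)` vanishes for disjoint
pairs, is `∑ p_i³ - ‖p‖⁴` when they share exactly one index, and is at most `‖p‖²` when
`{c, d} = {a, b}`. -/
lemma piExpect_collision_mul_collision_sub_sq_le {a b c d : ι} (hab : a ≠ b) (hcd : c ≠ d) :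
    piExpect q (fun x => collision h a b x * collision h c d x) - (∑ i, p i ^ 2) ^ 2 ≤
      (if c ∈ ({a, b} : Finset ι) then 1 else 0) *
          (if d ∈ ({a, b} : Finset ι) then 1 else 0) * ∑ i, p i ^ 2 +
        ((if c ∈ ({a, b} : Finset ι) then 1 else 0) +
          (if d ∈ ({a, b} : Finset ι) then 1 else 0)) * ∑ i, p i ^ 3 := by
  have hs : 0 ≤ ∑ i, p i ^ 2 := sum_nonneg fun i _ => sq_nonneg _
  have ht : 0 ≤ ∑ i, p i ^ 3 := sum_nonneg fun i _ => pow_nonneg (hp0 i) 3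
  by_cases hc : c ∈ ({a, b} : Finset ι) <;> by_cases hd : d ∈ ({a, b} : Finset ι) <;>
    simp only [hc, hd, if_true, if_false] <;> simp only [mem_insert, mem_singleton] at hc hd
  · have : piExpect q (fun x => collision h a b x * collision h c d x) = ∑ i, p i ^ 2 := by
      have hcd' : (c = a ∧ d = b) ∨ (c = b ∧ d = a) := by grind
      rcases hcd' with ⟨rfl, rfl⟩ | ⟨rfl, rfl⟩
      · simp only [collision_mul_self, piExpect_collision h hq1 hp hcd]
      · simp only [collision_comm h d c, collision_mul_self, piExpect_collision h hq1 hp hcd]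
    nlinarith
  · simp only [not_or] at hd
    have : piExpect q (fun x => collision h a b x * collision h c d x) = ∑ i, p i ^ 3 := by
      rcases hc with hc | hc <;> rw [hc]
      · exact piExpect_collision_mul_collision_of_three h hq1 hp hab (Ne.symm hd.1) (Ne.symm hd.2)
      · rw [collision_comm h a b]
        exact piExpect_collision_mul_collision_of_three h hq1 hp hab.symm (Ne.symm hd.2)
          (Ne.symm hd.1)
    nlinarith
  · simp only [not_or] at hc
    have : piExpect q (fun x => collision h a b x * collision h c d x) = ∑ i, p i ^ 3 := by
      rcases hd with hd | hd <;> rw [hd]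
      · rw [collision_comm h c a]
        exact piExpect_collision_mul_collision_of_three h hq1 hp hab (Ne.symm hc.1) (Ne.symm hc.2)
      · rw [collision_comm h a b, collision_comm h c b]
        exact piExpect_collision_mul_collision_of_three h hq1 hp hab.symm (Ne.symm hc.2)
          (Ne.symm hc.1)
    nlinarith
  · simp only [not_or] at hc hd
    rw [piExpect_collision_mul_collision_of_four h hq1 hp hab (Ne.symm hc.1) (Ne.symm hd.1)
      (Ne.symm hc.2) (Ne.symm hd.2) hcd]
    simp

lemma sum_piExpect_collision_mul_collision_sub_sq_le {a b : ι} (hab : a ≠ b) :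
    ∑ pr ∈ (univ : Finset ι).offDiag,
        (piExpect q (fun x => collision h a b x * collision h pr.1 pr.2 x) - (∑ i, p i ^ 2) ^ 2)
      ≤ 4 * ∑ i, p i ^ 2 + 4 * Fintype.card ι * ∑ i, p i ^ 3 := by
  set s := ∑ i, p i ^ 2
  set t := ∑ i, p i ^ 3
  set ind : ι → ℝ := fun c => if c ∈ ({a, b} : Finset ι) then 1 else 0
  have hind : ∑ c, ind c = 2 := by
    simp only [ind, Fintype.sum_ite_mem, sum_const, card_pair hab]
    norm_num
  have hs : 0 ≤ s := sum_nonneg fun i _ => sq_nonneg _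
  have ht : 0 ≤ t := sum_nonneg fun i _ => pow_nonneg (hp0 i) 3
  calc _ ≤ ∑ pr ∈ (univ : Finset ι).offDiag,
          (ind pr.1 * ind pr.2 * s + (ind pr.1 + ind pr.2) * t) :=
        sum_le_sum fun pr hpr => piExpect_collision_mul_collision_sub_sq_le h hq1 hp hp0 hab
          (mem_offDiag.1 hpr).2.2
    _ ≤ ∑ pr : ι × ι, (ind pr.1 * ind pr.2 * s + (ind pr.1 + ind pr.2) * t) :=
        sum_le_sum_of_subset_of_nonneg (subset_univ _) fun pr _ _ => by positivity
    _ = 4 * s + 4 * Fintype.card ι * t := by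
        simp only [Fintype.sum_prod_type, sum_add_distrib, add_mul, ← sum_mul, ← mul_sum, hind,
          sum_const, card_univ, nsmul_eq_mul]
        ring

lemma piExpect_numCollisions_sub_sq_le :
    piExpect q (fun x : ι → U =>
        (numCollisions h x - #(univ : Finset ι).offDiag * ∑ i, p i ^ 2) ^ 2) ≤
      #(univ : Finset ι).offDiag * (4 * ∑ i, p i ^ 2 + 4 * Fintype.card ι * ∑ i, p i ^ 3) := by
  unfold numCollisions
  rw [piExpect_sum_sub_sq hq1 _ (fun pr x => collision h pr.1 pr.2 x)
    fun pr hpr => piExpect_collision h hq1 hp (mem_offDiag.1 hpr).2.2]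
  calc _ ≤ ∑ _pr ∈ (univ : Finset ι).offDiag,
        (4 * ∑ i, p i ^ 2 + 4 * Fintype.card ι * ∑ i, p i ^ 3) :=
        sum_le_sum fun pr hpr => sum_piExpect_collision_mul_collision_sub_sq_le h hq1 hp hp0
          (mem_offDiag.1 hpr).2.2
    _ = _ := by rw [sum_const, nsmul_eq_mul]

end CollisionMoments

lemma one_le_card_mul_sum_sq {n : ℕ} {p : Fin n → ℝ} (hp1 : ∑ i, p i = 1) :
    1 ≤ n * ∑ i, p i ^ 2 := by
  simpa [hp1] using sq_sum_le_card_mul_sum_sq (s := univ) (f := p)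

lemma sum_pow_three_le {n : ℕ} (p : Fin n → ℝ) :
    ∑ i, p i ^ 3 ≤ (∑ i, p i ^ 2) * √(∑ i, p i ^ 2) := by
  rw [sum_mul]
  refine sum_le_sum fun i _ => ?_
  have : p i ≤ √(∑ i, p i ^ 2) :=
    Real.le_sqrt_of_sq_le (single_le_sum (fun j _ => sq_nonneg (p j)) (mem_univ i))
  rw [pow_succ]
  exact mul_le_mul_of_nonneg_left this (sq_nonneg _)

/- `25 ≤ n` enters through `ε² √s M ≥ √n ≥ 5`, just enough for the `∑ p_i³` term. -/
lemma variance_bound_le_sq_div_ten {n M ε s t : ℝ} (hn : 25 ≤ n) (hε0 : 0 < ε)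
    (hε : ε < 1 / 3) (hnM : n ≤ ε ^ 2 * M) (hns : 1 ≤ n * s) (hts : t ≤ s * √s) :
    M * (M - 1) * (4 * s + 4 * M * t) ≤ (3 * ε * (M * (M - 1)) * s) ^ 2 / 10 := by
  set a := ε ^ 2
  have ha0 : 0 < a := by positivity
  have ha : a < 1 / 9 := by nlinarith
  have hM : 225 ≤ M := by nlinarith
  have hs0 : 0 < s := by nlinarith
  have hasM : 1 ≤ a * s * M := by nlinarith [mul_le_mul_of_nonneg_right hnM hs0.le]
  set r := √s
  have hr : r * r = s := Real.mul_self_sqrt hs0.le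
  have hr0 : 0 < r := Real.sqrt_pos.2 hs0
  have harM : 5 ≤ a * r * M := by
    have : 25 ≤ (a * r * M) ^ 2 := by
      calc (25 : ℝ) ≤ n * (n * s) := by nlinarith
        _ = n * n * s := by ring
        _ ≤ (a * M) * (a * M) * s := by gcongr
        _ = (a * r * M) ^ 2 := by rw [← hr]; ring
    nlinarith [mul_pos (mul_pos ha0 hr0) (by linarith : (0 : ℝ) < M)]
  have h1 : 4 * s ≤ 9 / 100 * a * s ^ 2 * (M * (M - 1)) := by
    have : 4 * s ≤ 9 / 100 * s * (M - 1) := by nlinarith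
    have : 0 ≤ s * (M - 1) * (a * s * M - 1) := by
      apply mul_nonneg <;> nlinarith
    nlinarith
  have h2 : 4 * M * t ≤ 81 / 100 * a * s ^ 2 * (M * (M - 1)) := by
    have harM' : 4 ≤ 81 / 100 * (a * r * (M - 1)) := by nlinarith
    calc 4 * M * t ≤ 4 * (M * s * r) := by nlinarith
      _ ≤ 81 / 100 * (a * r * (M - 1)) * (M * s * r) := by
        gcongr
      _ = 81 / 100 * a * s ^ 2 * (M * (M - 1)) := by rw [← hr]; ring
  have hK : 0 ≤ M * (M - 1) := by nlinarith
  calc M * (M - 1) * (4 * s + 4 * M * t)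
      ≤ M * (M - 1) * (9 / 10 * a * s ^ 2 * (M * (M - 1))) := by gcongr; linarith
    _ = (3 * ε * (M * (M - 1)) * s) ^ 2 / 10 := by ring

lemma natCast_le_sq_mul_of_eq_rpow {n : ℕ} (hn : 1 ≤ n) {m ε δ : ℝ} (hε : 0 < ε) (hδ : 0 ≤ δ)
    (hmn : m = ε ^ (-2 : ℝ) * (n : ℝ) ^ (1 + δ)) : (n : ℝ) ≤ ε ^ 2 * m := by
  rw [hmn, Real.rpow_neg hε.le, Real.rpow_two, ← mul_assoc, mul_inv_cancel₀ (by positivity),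
    one_mul]
  exact Real.self_le_rpow_of_one_le (by exact_mod_cast hn) (by linarith)

theorem prob_A_ge_general
    {U : Type*} [Fintype U]
    (n : ℕ) (hn : 24 < n)
    (q : U → ℝ) (hq0 : ∀ u, 0 ≤ q u) (hq1 : ∑ u, q u = 1)
    (h : U → Fin n)
    (p : Fin n → ℝ)
    (hp : ∀ i, p i = ∑ u ∈ Finset.univ.filter (fun u => h u = i), q u)
    (m : ℕ) (hm : 2 ≤ m)
    (ε δ : ℝ) (hε0 : 0 < ε) (hε : ε < 1 / 3) (hδ : 0 < δ)
    (hmn : (m : ℝ) = ε ^ (-2 : ℝ) * (n : ℝ) ^ (1 + δ)) :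
    (9 : ℝ) / 10
      ≤ Pr q {y : Fin m → U |
          |collEst h y * (1 / ∑ i : Fin n, p i ^ 2) - 1| ≤ 3 * ε} := by
  set s := ∑ i, p i ^ 2
  have hp0 : ∀ i, 0 ≤ p i := fun i => by rw [hp i]; exact sum_nonneg fun u _ => hq0 u
  have hns : 1 ≤ n * s := one_le_card_mul_sum_sq (by simp only [hp, sum_fiberwise, hq1])
  have hnm := natCast_le_sq_mul_of_eq_rpow (by omega) hε0 hδ.le hmn
  have hs0 : 0 < s := by nlinarith
  have hKs : 0 < m * (m - 1) * s := by
    have : (1 : ℝ) < m := by exact_mod_cast hm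
    apply mul_pos <;> nlinarith
  have hvar := piExpect_numCollisions_sub_sq_le (ι := Fin m) h hq1 hp hp0
  rw [card_offDiag_univ, Fintype.card_fin] at hvar
  have hbudget := variance_bound_le_sq_div_ten (by exact_mod_cast hn) hε0 hε hnm hns
    (sum_pow_three_le p)
  simp_rw [abs_collEst_mul_one_div_sub_one_le_iff h hm hs0]
  refine le_trans ?_ (one_sub_piExpect_sq_div_le_Pr hq0 hq1 _ _ (mul_pos (by positivity) hKs))
  rw [le_sub_comm, div_le_iff₀ (by positivity)]
  nlinarith

/-- Lemma 9 of the paper: For all `n > 24`, `0 < ε < 1/3`, `δ > 0`, and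
`m = ε⁻² n^(1+δ)`, the set `A` of key sequences whose empirical collision probability
estimates `‖p‖²` within relative error `3ε` has probability at least `9/10`. -/
theorem prob_A_ge
    {U : Type*} [Fintype U] [Nonempty U]
    (n : ℕ) (hn : 24 < n)
    (q : U → ℝ) (hq0 : ∀ u, 0 ≤ q u) (hq1 : ∑ u, q u = 1)
    (h : U → Fin n)
    (p : Fin n → ℝ)
    (hp : ∀ i, p i = ∑ u ∈ Finset.univ.filter (fun u => h u = i), q u)
    (m : ℕ) (hm : 2 ≤ m)
    (ε δ : ℝ) (hε0 : 0 < ε) (hε : ε < 1 / 3) (hδ : 0 < δ)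
    (hmn : (m : ℝ) = ε ^ (-2 : ℝ) * (n : ℝ) ^ (1 + δ)) :
    (9 : ℝ) / 10
      ≤ Pr q {y : Fin m → U |
          |collEst h y * (1 / ∑ i : Fin n, p i ^ 2) - 1| ≤ 3 * ε} :=
  prob_A_ge_general n hn q hq0 hq1 h p hp m hm ε δ hε0 hε hδ hmn
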